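/- arXiv:1202.6390 — 4 statements merged into one kernel-verified Lean document; each statement's English description precedes it below -/
import Mathlib

section
/- Let R be a regular family of finite subsets of ℕ. Then for every infinite subset L of ℕ, the order of the restricted family R↾L equals the order of R, i.e. o(R↾L) = o(R). -/
open Set Filter

namespace HOSM

/-- `t` is an initial segment of the finite set `s` (w.r.t. the increasing enumerations). -/
def InitSeg (t s : Finset ℕ) : Prop :=
  t ⊆ s ∧ ∀ a ∈ s, ∀ b ∈ t, a ≤ b → a ∈ t

/-- `t` is a proper initial segment of `s`. -/
def ProperInitSeg (t s : Finset ℕ) : Prop := InitSeg t s ∧ t ≠ s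

/-- The initial-segment closure `F̂` of a family `F`. -/
def hat (F : Set (Finset ℕ)) : Set (Finset ℕ) := {t | ∃ s ∈ F, InitSeg t s}

/-- The restriction `F↾L = {s ∈ F : s ⊆ L}`. -/
def restrict (F : Set (Finset ℕ)) (L : Set ℕ) : Set (Finset ℕ) :=
  {s | s ∈ F ∧ (s : Set ℕ) ⊆ L}

/-- `F` is hereditary: it contains all subsets of its members. -/
def Hereditary (F : Set (Finset ℕ)) : Prop := ∀ s ∈ F, ∀ t ⊆ s, t ∈ F

/-- `elt s k` is the `k`-th smallest element of `s` (0-indexed; junk value `0` out of range). -/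
def elt (s : Finset ℕ) (k : ℕ) : ℕ := (s.sort (· ≤ ·)).getD k 0

/-- `F` is spreading. -/
def Spreading (F : Set (Finset ℕ)) : Prop :=
  ∀ s ∈ F, ∀ t : Finset ℕ, t.card = s.card → (∀ k < s.card, elt s k ≤ elt t k) → t ∈ F

/-- The characteristic function of a finite set, as an element of `{0,1}^ℕ`. -/
def chi (s : Finset ℕ) : ℕ → Bool := fun n => decide (n ∈ s)

/-- `F` is compact: the set of characteristic functions of its members is closed in `{0,1}^ℕ`. -/
def CompactFam (F : Set (Finset ℕ)) : Prop := IsClosed (chi '' F)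

/-- `F` is regular: compact, hereditary and spreading. -/
def RegularFam (F : Set (Finset ℕ)) : Prop := CompactFam F ∧ Hereditary F ∧ Spreading F

/-- `F` is thin: no member is a proper initial segment of another member. -/
def Thin (F : Set (Finset ℕ)) : Prop := ∀ s ∈ F, ∀ t ∈ F, ¬ ProperInitSeg t s

/-- `F` is regular thin: thin, and its closure `F̂` is regular. -/
def RegularThin (F : Set (Finset ℕ)) : Prop := Thin F ∧ RegularFam (hat F)

/-- The relation on finite sets: `extRel F t s` iff `t ∈ F̂` and `s` is a proper initial
segment of `t`.  Rank with respect to it computes the order `o_{F̂}`. -/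
def extRel (F : Set (Finset ℕ)) (t s : Finset ℕ) : Prop := t ∈ hat F ∧ ProperInitSeg s t

open scoped Classical in
/-- The order `o(F)` of a family: the ordinal rank of the tree `F̂` at `∅`
(junk value `0` if `F̂` is ill-founded). -/
noncomputable def famOrder (F : Set (Finset ℕ)) : Ordinal :=
  if h : Acc (extRel F) (∅ : Finset ℕ) then h.rank else 0

/-- `nth L k` is the `k`-th smallest element of the set `L` (0-indexed). -/
noncomputable def nth (L : Set ℕ) (k : ℕ) : ℕ := Nat.nth (· ∈ L) k

/-- `L(s) = {L(k) : k ∈ s}` for a finite set `s`. -/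
noncomputable def mapSet (L : Set ℕ) (s : Finset ℕ) : Finset ℕ := s.image (nth L)

/-- An `l`-tuple of nonempty finite subsets of `ℕ` is a plegma family. -/
def IsPlegma {l : ℕ} (s : Fin l → Finset ℕ) : Prop :=
  (∀ i, (s i).Nonempty) ∧
  (∀ i j : Fin l, i < j → ∀ k, k < (s i).card → k < (s j).card →
      elt (s i) k < elt (s j) k) ∧
  (∀ i j : Fin l, ∀ k, k < (s i).card → k + 1 < (s j).card →
      elt (s i) k < elt (s j) (k + 1))

/-- A plegma pair. -/
def IsPlegmaPair (s t : Finset ℕ) : Prop := IsPlegma ![s, t]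

/-- `Plm l G`: the set of plegma `l`-tuples with members in `G`. -/
def Plm (l : ℕ) (G : Set (Finset ℕ)) : Set (Fin l → Finset ℕ) :=
  {s | IsPlegma s ∧ ∀ i, s i ∈ G}

/-- `s` is an initial segment of the infinite set `N`. -/
def InitSegOfInf (s : Finset ℕ) (N : Set ℕ) : Prop :=
  (s : Set ℕ) ⊆ N ∧ ∀ a ∈ N, ∀ b ∈ s, a ≤ b → a ∈ s

/-- `F` is very large in `M`: every infinite subset of `M` has an initial segment in `F`. -/
def VeryLarge (F : Set (Finset ℕ)) (M : Set ℕ) : Prop :=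
  ∀ N : Set ℕ, N ⊆ M → N.Infinite → ∃ s ∈ F, InitSegOfInf s N

/-- `F↾↾L`. -/
def restrict2 (F : Set (Finset ℕ)) (L : Set ℕ) : Set (Finset ℕ) :=
  {s | s ∈ restrict F L ∧ ∀ j, j + 1 < s.card → ∃ l ∈ L, elt s j < l ∧ l < elt s (j + 1)}

/-- `φ` is plegma preserving on `D`. -/
def PlegmaPreserving (D : Set (Finset ℕ)) (φ : Finset ℕ → Finset ℕ) : Prop :=
  ∀ s₁ ∈ D, ∀ s₂ ∈ D, IsPlegmaPair s₁ s₂ → IsPlegmaPair (φ s₁) (φ s₂)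

end HOSM

open HOSM

/-!
Since `R↾L ⊆ R`, the tree `R↾L` sits inside the tree `R`. Conversely, if `ℓ` enumerates `L`
increasingly, `s ↦ ℓ(s)` sends `R` into `R↾L` (by spreading, as `n ≤ ℓ(n)`) and proper initial
segments to proper initial segments, so it embeds the tree `R` into `R↾L` and fixes `∅`. Maps of
trees preserving the extension relation transfer well-foundedness backwards and do not decrease
rank, so the two trees are well-founded together and have equal rank at `∅`.
-/

section RelationMaps

variable {α : Type*} {r r' : α → α → Prop} {f : α → α}

theorem Acc.of_map (hf : ∀ a b, r a b → r' (f a) (f b)) {a : α} (h : Acc r' (f a)) : Acc r a :=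
  Subrelation.accessible (fun h => hf _ _ h) (InvImage.accessible f h)

theorem Acc.rank_le_rank_of_map (hf : ∀ a b, r a b → r' (f a) (f b)) {a b : α} (ha : Acc r a)
    (hab : f a = b) (hb : Acc r' b) : ha.rank ≤ hb.rank := by
  induction ha generalizing b with
  | intro a h ih =>
    subst hab
    rw [Acc.rank_eq]
    refine Ordinal.iSup_le fun ⟨c, hca⟩ => Order.succ_le_of_lt ?_
    exact (ih c hca rfl (hb.inv (hf _ _ hca))).trans_lt (hb.rank_lt_of_rel (hf _ _ hca))

end RelationMaps

namespace HOSM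

theorem famOrder_eq_of_maps {F G : Set (Finset ℕ)} {f g : Finset ℕ → Finset ℕ}
    (hf₀ : f ∅ = ∅) (hg₀ : g ∅ = ∅) (hf : ∀ t s, extRel F t s → extRel G (f t) (f s))
    (hg : ∀ t s, extRel G t s → extRel F (g t) (g s)) : famOrder F = famOrder G := by
  have hF : Acc (extRel G) ∅ → Acc (extRel F) ∅ := fun h => Acc.of_map hf (by rwa [hf₀])
  have hG : Acc (extRel F) ∅ → Acc (extRel G) ∅ := fun h => Acc.of_map hg (by rwa [hg₀])
  unfold famOrder
  by_cases h : Acc (extRel F) ∅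
  · rw [dif_pos h, dif_pos (hG h)]
    exact le_antisymm (Acc.rank_le_rank_of_map hf h hf₀ (hG h))
      (Acc.rank_le_rank_of_map hg (hG h) hg₀ h)
  · rw [dif_neg h, dif_neg (mt hF h)]

theorem hat_mono {F G : Set (Finset ℕ)} (h : F ⊆ G) : hat F ⊆ hat G :=
  fun _ ⟨s, hs, hts⟩ => ⟨s, h hs, hts⟩

theorem extRel_mono {F G : Set (Finset ℕ)} (h : F ⊆ G) {t s : Finset ℕ} (hts : extRel F t s) :
    extRel G t s :=
  ⟨hat_mono h hts.1, hts.2⟩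

theorem restrict_subset (F : Set (Finset ℕ)) (L : Set ℕ) : restrict F L ⊆ F :=
  fun _ hs => hs.1

section StrictMonoImage

variable {g : ℕ → ℕ} (hg : StrictMono g)
include hg

theorem elt_image (s : Finset ℕ) {k : ℕ} (hk : k < s.card) :
    elt (s.image g) k = g (elt s k) := by
  have hsort : (s.image g).sort = s.sort.map g := by
    have h := (hg.strictMonoOn (s : Set ℕ)).map_finsetSort (f := ⟨g, hg.injective⟩)
    rw [Finset.map_eq_image] at h
    exact h.symm
  have hk' : k < s.sort.length := by rwa [Finset.length_sort]
  simp [elt, hsort, List.getElem?_eq_getElem hk']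

theorem Spreading.image_mem {F : Set (Finset ℕ)} (hF : Spreading F) {s : Finset ℕ}
    (hs : s ∈ F) : s.image g ∈ F :=
  hF s hs _ (Finset.card_image_of_injective s hg.injective) fun _ hk =>
    (elt_image hg s hk).symm ▸ hg.le_apply

theorem InitSeg.image {t s : Finset ℕ} (h : InitSeg t s) : InitSeg (t.image g) (s.image g) := by
  refine ⟨Finset.image_subset_image h.1, ?_⟩
  simp only [Finset.mem_image]
  rintro _ ⟨a, ha, rfl⟩ _ ⟨b, hb, rfl⟩ hab
  exact ⟨a, h.2 a ha b hb (hg.le_iff_le.mp hab), rfl⟩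

theorem ProperInitSeg.image {t s : Finset ℕ} (h : ProperInitSeg t s) :
    ProperInitSeg (t.image g) (s.image g) :=
  ⟨h.1.image hg, fun he => h.2 (Finset.image_injective hg.injective he)⟩

end StrictMonoImage

section Restrict

variable {L : Set ℕ} (hL : L.Infinite)
include hL

theorem mapSet_mem_restrict {F : Set (Finset ℕ)} (hF : Spreading F) {s : Finset ℕ}
    (hs : s ∈ F) : mapSet L s ∈ restrict F L := by
  refine ⟨hF.image_mem (Nat.nth_strictMono hL) hs, ?_⟩
  simp only [mapSet, Finset.coe_image]
  rintro _ ⟨k, -, rfl⟩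
  exact Nat.nth_mem_of_infinite hL k

theorem extRel_restrict_mapSet {F : Set (Finset ℕ)} (hF : Spreading F) {t s : Finset ℕ}
    (hts : extRel F t s) : extRel (restrict F L) (mapSet L t) (mapSet L s) := by
  obtain ⟨⟨u, hu, htu⟩, hst⟩ := hts
  exact ⟨⟨mapSet L u, mapSet_mem_restrict hL hF hu, htu.image (Nat.nth_strictMono hL)⟩,
    hst.image (Nat.nth_strictMono hL)⟩

end Restrict

end HOSM

/-- If `R` is a regular family of finite subsets of `ℕ`, then for every
infinite `L ⊆ ℕ` the order of `R↾L` equals the order of `R`. -/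
theorem famOrder_restrict_eq (R : Set (Finset ℕ)) (hR : RegularFam R) :
    ∀ L : Set ℕ, L.Infinite → famOrder (restrict R L) = famOrder R := by
  intro L hL
  exact famOrder_eq_of_maps (f := id) (g := mapSet L) rfl (Finset.image_empty _)
    (fun _ _ => extRel_mono (restrict_subset R L))
    (fun _ _ => extRel_restrict_mapSet hL hR.2.2)
end

section
/- Let F be a thin family of finite subsets of ℕ. Then for every finite partition F = F₁ ∪ … ∪ F_k (k ≥ 2) of F and every M ∈ [ℕ]^∞ there exist L ∈ [M]^∞ and 1 ≤ i₀ ≤ k such that F↾L ⊆ F_{i₀}. -/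
open Set Filter

open HOSM

/-!
By induction on the number of pieces the theorem reduces to the Nash-Williams dichotomy: for
every family `A` and infinite `M` there is an infinite `L ⊆ M` such that either every infinite
subset of `L` has an initial segment in `A`, or no finite subset of `L` belongs to `A`. For
`A = F ∩ F₁` with `F` thin, the first alternative gives `F↾L ⊆ F₁`, because in a thin family an
infinite set has at most one initial segment; the second lets us pass to `F↾L` and the
remaining pieces.

The dichotomy is proved by Galvin–Prikry combinatorial forcing: `X` accepts `s` if every
infinite `Y ⊆ X` has an initial segment of `s ∪ Y` in `A`, and rejects `s` if no infinite
subset of `X` accepts it. A diagonal argument gives `L` that decides every finite `s ⊆ L` on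
the part of `L` above `s`. If `L` rejects `∅`: a rejected `s` has only finitely many accepted
one-point extensions, so a second diagonalisation gives `L' ⊆ L` all of whose finite subsets
are rejected, and then none of them lies in `A`.
-/

namespace HOSM

/-- Written `X/s` in the literature. -/
def tailAbove (s : Finset ℕ) (X : Set ℕ) : Set ℕ := {x ∈ X | ∀ m ∈ s, m < x}

section TailAbove

variable {s : Finset ℕ} {X : Set ℕ}

@[simp]
lemma tailAbove_empty (X : Set ℕ) : tailAbove ∅ X = X := by
  simp [tailAbove]

lemma tailAbove_insert (n : ℕ) (s : Finset ℕ) (X : Set ℕ) :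
    tailAbove (insert n s) X = tailAbove s X ∩ Ioi n := by
  ext x
  simp only [tailAbove, Finset.forall_mem_insert, mem_inter_iff, mem_Ioi, Set.mem_ofPred_eq]
  tauto

lemma tailAbove_subset : tailAbove s X ⊆ X := fun _ hx => hx.1

lemma infinite_tailAbove (hX : X.Infinite) (s : Finset ℕ) : (tailAbove s X).Infinite := by
  refine (hX.sdiff (finite_Iic (s.sup id))).mono ?_
  rintro x ⟨hxX, hx⟩
  exact ⟨hxX, fun m hm => (Finset.le_sup (f := id) hm).trans_lt (not_le.1 hx)⟩

end TailAbove

section InitialSegments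

variable {s t : Finset ℕ} {N : Set ℕ}

lemma initSegOfInf_union (h : ∀ n ∈ N, ∀ m ∈ s, m < n) : InitSegOfInf s (↑s ∪ N) := by
  refine ⟨subset_union_left, fun a ha b hb hab => ?_⟩
  rcases ha with ha | ha
  · exact ha
  · exact absurd hab (not_le.2 (h a ha b hb))

lemma InitSegOfInf.subset_or_subset (hs : InitSegOfInf s N) (ht : InitSegOfInf t N) :
    s ⊆ t ∨ t ⊆ s := by
  refine or_iff_not_imp_left.2 fun hst a ha => ?_
  obtain ⟨b, hb, hbt⟩ := Finset.not_subset.1 hst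
  rcases le_or_gt a b with hab | hba
  · exact hs.2 a (ht.1 ha) b hb hab
  · exact absurd (ht.2 b (hs.1 hb) a ha hba.le) hbt

lemma InitSegOfInf.initSeg_of_subset (hs : InitSegOfInf s N) (ht : InitSegOfInf t N)
    (hts : t ⊆ s) : InitSeg t s :=
  ⟨hts, fun a ha b hb hab => ht.2 a (hs.1 ha) b hb hab⟩

lemma Thin.eq_of_initSegOfInf {F : Set (Finset ℕ)} (hF : Thin F) (hsF : s ∈ F) (htF : t ∈ F)
    (hs : InitSegOfInf s N) (ht : InitSegOfInf t N) : s = t := by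
  by_contra hne
  rcases hs.subset_or_subset ht with hst | hts
  · exact hF t htF s hsF ⟨ht.initSeg_of_subset hs hst, hne⟩
  · exact hF s hsF t htF ⟨hs.initSeg_of_subset ht hts, Ne.symm hne⟩

end InitialSegments

section Diagonal

variable {M : Set ℕ} {Q : Finset ℕ → Set ℕ → Prop}

lemma exists_infinite_subset_forall_mem (hQ_anti : ∀ s, Antitone (Q s))
    (hQ : ∀ s : Finset ℕ, ↑s ⊆ M → ∀ X ⊆ M, X.Infinite → ∃ Y ⊆ X, Y.Infinite ∧ Q s Y)
    (T : Finset (Finset ℕ)) (hT : ∀ s ∈ T, ↑s ⊆ M) {X : Set ℕ} (hXM : X ⊆ M)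
    (hX : X.Infinite) : ∃ Y ⊆ X, Y.Infinite ∧ ∀ s ∈ T, Q s Y := by
  classical
  induction T using Finset.induction_on generalizing X with
  | empty => exact ⟨X, subset_rfl, hX, by simp⟩
  | insert s T _ ih =>
    rw [Finset.forall_mem_insert] at hT
    obtain ⟨Y, hYX, hY, hQY⟩ := hQ s hT.1 X hXM hX
    obtain ⟨Z, hZY, hZ, hQZ⟩ := ih hT.2 (hYX.trans hXM) hY
    exact ⟨Z, hZY.trans hYX, hZ, Finset.forall_mem_insert _ _ _ |>.2 ⟨hQ_anti s hZY hQY, hQZ⟩⟩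

lemma exists_fusion_sequence (hQ_anti : ∀ s, Antitone (Q s))
    (hQ : ∀ s : Finset ℕ, ↑s ⊆ M → ∀ X ⊆ M, X.Infinite → ∃ Y ⊆ X, Y.Infinite ∧ Q s Y)
    (hM : M.Infinite) :
    ∃ X : ℕ → Set ℕ, (∀ i, X i ⊆ M ∧ (X i).Infinite) ∧
      (∀ i, X (i + 1) ⊆ X i ∩ Ioi (sInf (X i))) ∧
      ∀ i (s : Finset ℕ), ↑s ⊆ M → ↑s ⊆ Iic (sInf (X i)) → Q s (X (i + 1)) := by
  classical
  have step : ∀ X : {X : Set ℕ // X ⊆ M ∧ X.Infinite}, ∃ Y : {X : Set ℕ // X ⊆ M ∧ X.Infinite},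
      Y.1 ⊆ X.1 ∩ Ioi (sInf X.1) ∧
        ∀ s : Finset ℕ, ↑s ⊆ M → ↑s ⊆ Iic (sInf X.1) → Q s Y.1 := by
    rintro ⟨X, hXM, hX⟩
    let T := ((Finset.range (sInf X + 1)).filter (· ∈ M)).powerset
    obtain ⟨Y, hYX, hY, hQY⟩ := exists_infinite_subset_forall_mem hQ_anti hQ T
      (fun s hs x hx => (Finset.mem_filter.1 (Finset.mem_powerset.1 hs hx)).2)
      (inter_subset_left.trans hXM) ((hX.sdiff (finite_Iic (sInf X))).mono
        fun x hx => ⟨hx.1, lt_of_not_ge (mem_Iic.not.1 hx.2)⟩)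
    refine ⟨⟨Y, hYX.trans (inter_subset_left.trans hXM), hY⟩, hYX, fun s hsM hsc => hQY s ?_⟩
    refine Finset.mem_powerset.2 fun x hx => Finset.mem_filter.2 ⟨?_, hsM hx⟩
    exact Finset.mem_range.2 (Nat.lt_succ_of_le (hsc hx))
  choose next hnext using step
  let X : ℕ → {X : Set ℕ // X ⊆ M ∧ X.Infinite} := fun i => next^[i] ⟨M, subset_rfl, hM⟩
  have hX_succ : ∀ i, X (i + 1) = next (X i) := fun i => Function.iterate_succ_apply' _ _ _
  refine ⟨fun i => (X i).1, fun i => (X i).2, fun i => ?_, fun i => ?_⟩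
  · dsimp only; rw [hX_succ]; exact (hnext _).1
  · dsimp only; rw [hX_succ]; exact (hnext _).2

theorem exists_forall_tailAbove (hQ_anti : ∀ s, Antitone (Q s))
    (hQ : ∀ s : Finset ℕ, ↑s ⊆ M → ∀ X ⊆ M, X.Infinite → ∃ Y ⊆ X, Y.Infinite ∧ Q s Y)
    (hM : M.Infinite) :
    ∃ L ⊆ M, L.Infinite ∧ ∀ s : Finset ℕ, ↑s ⊆ L → Q s (tailAbove s L) := by
  obtain ⟨X, hX, hX_succ, hQX⟩ := exists_fusion_sequence hQ_anti hQ hM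
  have hmin : ∀ i, sInf (X i) ∈ X i := fun i => Nat.sInf_mem (hX i).2.nonempty
  have hX_anti : Antitone X := antitone_nat_of_succ_le fun i => (hX_succ i).trans inter_subset_left
  have hmin_mono : StrictMono fun i => sInf (X i) :=
    strictMono_nat_of_lt_succ fun i => (hX_succ i (hmin (i + 1))).2
  -- starting at `X 1` keeps `L` inside a set where `Q ∅` holds
  let L := range fun i => sInf (X (i + 1))
  have hLM : L ⊆ M := by
    rintro _ ⟨i, rfl⟩
    exact (hX (i + 1)).1 (hmin (i + 1))
  have hL : L.Infinite :=
    infinite_range_of_injective (hmin_mono.comp (strictMono_id.add_const 1)).injective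
  refine ⟨L, hLM, hL, fun s hsL => ?_⟩
  suffices ∃ i, ↑s ⊆ Iic (sInf (X i)) ∧ tailAbove s L ⊆ X (i + 1) by
    obtain ⟨i, hsi, htail⟩ := this
    exact hQ_anti s htail (hQX i s (hsL.trans hLM) hsi)
  rcases s.eq_empty_or_nonempty with rfl | hs
  · refine ⟨0, by simp, ?_⟩
    rintro _ ⟨⟨i, rfl⟩, -⟩
    exact hX_anti (Nat.le_add_left 1 i) (hmin (i + 1))
  · obtain ⟨j, hj⟩ := hsL (s.max'_mem hs)
    dsimp only at hj
    refine ⟨j + 1, fun x hx => mem_Iic.2 (hj ▸ s.le_max' x hx), ?_⟩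
    rintro _ ⟨⟨i, rfl⟩, hi⟩
    have hmax := hi _ (s.max'_mem hs)
    rw [← hj] at hmax
    have hji : j + 1 < i + 1 := hmin_mono.lt_iff_lt.1 hmax
    exact hX_anti (by omega) (hmin (i + 1))

end Diagonal

section Forcing

variable {A : Set (Finset ℕ)} {s t : Finset ℕ} {L X Y : Set ℕ}

def Accepts (A : Set (Finset ℕ)) (s : Finset ℕ) (X : Set ℕ) : Prop :=
  ∀ N ⊆ X, N.Infinite → ∃ t ∈ A, InitSegOfInf t (↑s ∪ N)

def Rejects (A : Set (Finset ℕ)) (s : Finset ℕ) (X : Set ℕ) : Prop :=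
  ∀ Y ⊆ X, Y.Infinite → ¬ Accepts A s Y

def Decides (A : Set (Finset ℕ)) (L : Set ℕ) : Prop :=
  ∀ s : Finset ℕ, ↑s ⊆ L → Accepts A s (tailAbove s L) ∨ Rejects A s (tailAbove s L)

lemma Accepts.mono (h : Accepts A s X) (hYX : Y ⊆ X) : Accepts A s Y :=
  fun N hN => h N (hN.trans hYX)

lemma Rejects.mono (h : Rejects A s X) (hYX : Y ⊆ X) : Rejects A s Y :=
  fun Z hZ => h Z (hZ.trans hYX)

lemma veryLarge_iff_accepts_empty : VeryLarge A X ↔ Accepts A ∅ X := by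
  simp [VeryLarge, Accepts]

lemma exists_accepts_or_rejects (hX : X.Infinite) :
    ∃ Y ⊆ X, Y.Infinite ∧ (Accepts A s Y ∨ Rejects A s Y) := by
  by_cases h : ∃ Y ⊆ X, Y.Infinite ∧ Accepts A s Y
  · obtain ⟨Y, hYX, hY, hacc⟩ := h
    exact ⟨Y, hYX, hY, Or.inl hacc⟩
  · exact ⟨X, subset_rfl, hX, Or.inr fun Y hYX hY hacc => h ⟨Y, hYX, hY, hacc⟩⟩

lemma accepts_tailAbove_of_mem (ht : t ∈ A) (X : Set ℕ) : Accepts A t (tailAbove t X) :=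
  fun _ hN _ => ⟨t, ht, initSegOfInf_union fun _ hn _ hm => (hN hn).2 _ hm⟩

lemma Rejects.finite_setOf_accepts_insert (h : Rejects A s X) :
    {n ∈ X | Accepts A (insert n s) (X ∩ Ioi n)}.Finite := by
  -- otherwise these `n` accept `s`: split an infinite subset into its least point and the rest
  by_contra hB
  refine h _ (fun n hn => hn.1) hB fun N hNB hN => ?_
  have hmin : sInf N ∈ N := Nat.sInf_mem hN.nonempty
  have hrest : N \ {sInf N} ⊆ X ∩ Ioi (sInf N) := fun x hx =>
    ⟨(hNB hx.1).1, lt_of_le_of_ne (Nat.sInf_le hx.1) (Ne.symm hx.2)⟩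
  obtain ⟨t, htA, ht⟩ := (hNB hmin).2 _ hrest (hN.sdiff (finite_singleton _))
  refine ⟨t, htA, ?_⟩
  rwa [Finset.coe_insert, insert_union, ← union_insert, insert_sdiff_singleton,
    insert_eq_of_mem hmin] at ht

lemma exists_decides (A : Set (Finset ℕ)) {M : Set ℕ} (hM : M.Infinite) :
    ∃ L ⊆ M, L.Infinite ∧ Decides A L :=
  exists_forall_tailAbove (Q := fun s Y => Accepts A s Y ∨ Rejects A s Y)
    (fun _ _ _ hXY h => h.imp (·.mono hXY) (·.mono hXY))
    (fun _ _ _ _ hX => exists_accepts_or_rejects hX) hM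

lemma Decides.exists_forall_rejects (hdec : Decides A L) (hL : L.Infinite)
    (hrej : Rejects A ∅ L) :
    ∃ L' ⊆ L, L'.Infinite ∧ ∀ s : Finset ℕ, ↑s ⊆ L' → Rejects A s (tailAbove s L) := by
  classical
  have hshrink : ∀ s : Finset ℕ, ↑s ⊆ L → ∀ X ⊆ L, X.Infinite → ∃ Y ⊆ X, Y.Infinite ∧
      (Rejects A s (tailAbove s L) →
        ∀ n ∈ Y, Rejects A (insert n s) (tailAbove (insert n s) L)) := by
    intro s hsL X hXL hX
    by_cases hs : Rejects A s (tailAbove s L)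
    · refine ⟨tailAbove s X \
          {n ∈ tailAbove s L | Accepts A (insert n s) (tailAbove s L ∩ Ioi n)},
        sdiff_subset.trans tailAbove_subset,
        (infinite_tailAbove hX s).sdiff hs.finite_setOf_accepts_insert, fun _ n hn => ?_⟩
      have hnL : n ∈ tailAbove s L := ⟨hXL hn.1.1, hn.1.2⟩
      rcases hdec (insert n s) (by simpa using insert_subset (hXL hn.1.1) hsL) with hacc | hrej
      · rw [tailAbove_insert] at hacc
        exact absurd ⟨hnL, hacc⟩ hn.2
      · exact hrej
    · exact ⟨X, subset_rfl, hX, fun h => absurd h hs⟩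
  obtain ⟨L', hL'L, hL', hext⟩ := exists_forall_tailAbove
    (by intro s X Y hXY h hs n hn; exact h hs n (hXY hn)) hshrink hL
  refine ⟨L', hL'L, hL', fun s hs => ?_⟩
  induction s using Finset.induction_on_max with
  | empty => simpa using hrej
  | insert n s hlt ih =>
    have hsL' : ↑s ⊆ L' := (Finset.coe_subset.2 (Finset.subset_insert n s)).trans hs
    exact hext s hsL' (ih hsL') n ⟨hs (Finset.mem_insert_self n s), hlt⟩

end Forcing

theorem exists_veryLarge_or_restrict_eq_empty (A : Set (Finset ℕ)) {M : Set ℕ}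
    (hM : M.Infinite) :
    ∃ L ⊆ M, L.Infinite ∧ (VeryLarge A L ∨ restrict A L = ∅) := by
  by_cases hacc : ∃ L ⊆ M, L.Infinite ∧ Accepts A ∅ L
  · obtain ⟨L, hLM, hL, hacc⟩ := hacc
    exact ⟨L, hLM, hL, Or.inl (veryLarge_iff_accepts_empty.2 hacc)⟩
  have hrej : Rejects A ∅ M := fun L hLM hL h => hacc ⟨L, hLM, hL, h⟩
  obtain ⟨L₁, hL₁M, hL₁, hdec⟩ := exists_decides A hM
  obtain ⟨L₂, hL₂L₁, hL₂, hrej₂⟩ := hdec.exists_forall_rejects hL₁ (hrej.mono hL₁M)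
  refine ⟨L₂, hL₂L₁.trans hL₁M, hL₂, Or.inr (eq_empty_of_forall_notMem fun t ht => ?_)⟩
  exact hrej₂ t ht.2 _ subset_rfl (infinite_tailAbove hL₁ t) (accepts_tailAbove_of_mem ht.1 L₁)

section Thin

variable {F A : Set (Finset ℕ)} {L L' : Set ℕ}

lemma Thin.restrict_subset_of_veryLarge (hF : Thin F) (hAF : A ⊆ F) (hL : L.Infinite)
    (hA : VeryLarge A L) : restrict F L ⊆ A := by
  rintro s ⟨hsF, hsL⟩
  obtain ⟨t, htA, ht⟩ := hA (↑s ∪ tailAbove s L) (union_subset hsL tailAbove_subset)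
    ((infinite_tailAbove hL s).mono subset_union_right)
  rwa [hF.eq_of_initSegOfInf hsF (hAF htA) (initSegOfInf_union fun _ hn _ hm => hn.2 _ hm) ht]

lemma Thin.mono {G : Set (Finset ℕ)} (hF : Thin F) (hGF : G ⊆ F) : Thin G :=
  fun s hs t ht => hF s (hGF hs) t (hGF ht)

lemma restrict_restrict_of_subset (h : L' ⊆ L) : restrict (restrict F L) L' = restrict F L' := by
  ext s
  exact ⟨fun hs => ⟨hs.1.1, hs.2⟩, fun hs => ⟨⟨hs.1, hs.2.trans h⟩, hs.2⟩⟩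

theorem Thin.exists_restrict_subset_of_subset_iUnion {n : ℕ} (hF : Thin F)
    (P : Fin (n + 1) → Set (Finset ℕ)) (hFP : F ⊆ ⋃ i, P i) {M : Set ℕ} (hM : M.Infinite) :
    ∃ L ⊆ M, L.Infinite ∧ ∃ i, restrict F L ⊆ P i := by
  induction n generalizing F M with
  | zero =>
    refine ⟨M, subset_rfl, hM, 0, fun s hs => ?_⟩
    obtain ⟨i, hi⟩ := mem_iUnion.1 (hFP hs.1)
    rwa [Fin.fin_one_eq_zero i] at hi
  | succ n ih =>
    obtain ⟨L, hLM, hL, hlarge | hempty⟩ := exists_veryLarge_or_restrict_eq_empty (F ∩ P 0) hM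
    · exact ⟨L, hLM, hL, 0, fun s hs =>
        (hF.restrict_subset_of_veryLarge inter_subset_left hL hlarge hs).2⟩
    have hcover : restrict F L ⊆ ⋃ i : Fin (n + 1), P i.succ := by
      intro s hs
      obtain ⟨i, hi⟩ := mem_iUnion.1 (hFP hs.1)
      cases i using Fin.cases with
      | zero => exact (notMem_empty s (hempty.subset ⟨⟨hs.1, hi⟩, hs.2⟩)).elim
      | succ j => exact mem_iUnion.2 ⟨j, hi⟩
    obtain ⟨L', hL'L, hL', i, hi⟩ := ih (hF.mono fun _ hs => hs.1) (fun i => P i.succ) hcover hL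
    exact ⟨L', hL'L.trans hLM, hL', i.succ, by rwa [restrict_restrict_of_subset hL'L] at hi⟩

end Thin

end HOSM

/-- If `F` is thin, then for every finite partition `F = F₁ ∪ … ∪ F_k`
(`k ≥ 2`) and every infinite `M ⊆ ℕ` there are an infinite `L ⊆ M` and `i₀` with
`F↾L ⊆ F_{i₀}`. -/
theorem thin_partition_ramsey (F : Set (Finset ℕ)) (hF : Thin F)
    (k : ℕ) (hk : 2 ≤ k) (P : Fin k → Set (Finset ℕ)) (hcover : F = ⋃ i, P i)
    (M : Set ℕ) (hM : M.Infinite) :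
    ∃ L : Set ℕ, L ⊆ M ∧ L.Infinite ∧ ∃ i₀ : Fin k, restrict F L ⊆ P i₀ := by
  obtain ⟨n, rfl⟩ : ∃ n, k = n + 1 := ⟨k - 1, by omega⟩
  exact Thin.exists_restrict_subset_of_subset_iUnion hF P hcover.subset hM
end

section
/- Let R be a regular family of finite subsets of ℕ and let M(R) denote the set of ⊑-maximal elements of R. Then M(R) is thin, the initial-segment closure of M(R) equals R, and consequently M(R) is regular thin with o(M(R)) = o(R). -/
open Set Filter

open HOSM

/-- The set of `⊑`-maximal elements of a family. -/
def MaxElems (R : Set (Finset ℕ)) : Set (Finset ℕ) :=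
  {s | s ∈ R ∧ ∀ t ∈ R, InitSeg s t → s = t}


lemma initSeg_refl (s : Finset ℕ) : InitSeg s s :=
  ⟨Finset.Subset.refl s, fun a ha _ _ _ => ha⟩

lemma initSeg_trans {t s u : Finset ℕ} (h1 : InitSeg t s) (h2 : InitSeg s u) :
    InitSeg t u := by
  refine ⟨h1.1.trans h2.1, fun a ha b hb hab => ?_⟩
  exact h1.2 a (h2.2 a ha b (h1.1 hb) hab) b hb hab

open Classical in
lemma no_infinite_chain (R : Set (Finset ℕ)) (hC : CompactFam R)
    (f : ℕ → Finset ℕ) (hf : ∀ n, f n ∈ R)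
    (hmono : ∀ n, ProperInitSeg (f n) (f (n + 1))) : False := by
  have hsub : ∀ n, f n ⊆ f (n + 1) := fun n => (hmono n).1.1
  have hss : ∀ n, f n ⊂ f (n + 1) := fun n => (hsub n).ssubset_of_ne (hmono n).2
  have hcard : ∀ n, n ≤ (f n).card := by
    intro n
    induction n with
    | zero => exact Nat.zero_le _
    | succ n ih => exact Nat.lt_of_le_of_lt ih (Finset.card_lt_card (hss n))
  have hmem : ∀ m k j, k ≤ j → m ∈ f k → m ∈ f j := by
    intro m k j hkj hm
    induction hkj with
    | refl => exact hm
    | step _ ih => exact hsub _ ih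
  set g : ℕ → Bool := fun m => decide (∃ k, m ∈ f k) with hg
  have htend : Filter.Tendsto (fun k => chi (f k)) Filter.atTop (nhds g) := by
    rw [tendsto_pi_nhds]
    intro m
    by_cases hm : ∃ k, m ∈ f k
    · obtain ⟨k₀, hk₀⟩ := hm
      refine tendsto_const_nhds.congr' ?_
      filter_upwards [Filter.eventually_ge_atTop k₀] with k hk
      have hmk : m ∈ f k := hmem m k₀ k hk hk₀
      have hgm : g m = true := by
        simp only [hg, decide_eq_true_eq]
        exact ⟨k₀, hk₀⟩
      rw [hgm]
      simp [chi, hmk]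
    · refine tendsto_const_nhds.congr' (Filter.Eventually.of_forall fun k => ?_)
      have : m ∉ f k := fun h => hm ⟨k, h⟩
      simp [hg, chi, this, hm]
  have hgmem : g ∈ chi '' R :=
    hC.mem_of_tendsto htend (Filter.Eventually.of_forall fun k => ⟨f k, hf k, rfl⟩)
  obtain ⟨t, -, hchit⟩ := hgmem
  have hsubt : ∀ n, f n ⊆ t := by
    intro n m hm
    have h1 : chi t m = g m := congrFun hchit m
    have h2 : g m = true := by simp [hg]; exact ⟨n, hm⟩
    rw [h2] at h1
    simpa [chi] using h1
  have := Finset.card_le_card (hsubt (t.card + 1))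
  have := hcard (t.card + 1)
  omega

lemma exists_max_ext (R : Set (Finset ℕ)) (hC : CompactFam R) {s : Finset ℕ}
    (hs : s ∈ R) : ∃ t ∈ MaxElems R, InitSeg s t := by
  by_contra hcon
  push_neg at hcon
  have key : ∀ t : {t // t ∈ R ∧ InitSeg s t},
      ∃ u : {t // t ∈ R ∧ InitSeg s t}, ProperInitSeg t.1 u.1 := by
    rintro ⟨t, ht, hst⟩
    have hnm : t ∉ MaxElems R := fun h => hcon t h hst
    simp only [MaxElems, Set.mem_setOf_eq, not_and, not_forall] at hnm
    obtain ⟨u, hu, htu, hne⟩ := hnm ht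
    exact ⟨⟨u, hu, initSeg_trans hst htu⟩, htu, hne⟩
  let F : ℕ → {t // t ∈ R ∧ InitSeg s t} := fun n =>
    Nat.rec ⟨s, hs, initSeg_refl s⟩ (fun _ p => Classical.choose (key p)) n
  have hF : ∀ n, ProperInitSeg (F n).1 (F (n + 1)).1 := fun n =>
    Classical.choose_spec (key (F n))
  exact no_infinite_chain R hC (fun n => (F n).1) (fun n => (F n).2.1) hF

lemma hat_maxElems (R : Set (Finset ℕ)) (hR : RegularFam R) :
    hat (MaxElems R) = R := by
  ext t
  constructor
  · rintro ⟨u, ⟨hu, -⟩, htu⟩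
    exact hR.2.1 u hu t htu.1
  · intro ht
    obtain ⟨u, hu, htu⟩ := exists_max_ext R hR.1 ht
    exact ⟨u, hu, htu⟩

lemma hat_self (R : Set (Finset ℕ)) (hR : RegularFam R) : hat R = R := by
  ext t
  constructor
  · rintro ⟨u, hu, htu⟩
    exact hR.2.1 u hu t htu.1
  · intro ht
    exact ⟨t, ht, initSeg_refl t⟩

/-- For a regular family `R`, the set `M(R)` of `⊑`-maximal elements of `R`
is thin, its initial-segment closure equals `R`, and hence `M(R)` is regular thin with
`o(M(R)) = o(R)`. -/
theorem maxElems_regular_thin (R : Set (Finset ℕ)) (hR : RegularFam R) :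
    Thin (MaxElems R) ∧ hat (MaxElems R) = R ∧ RegularThin (MaxElems R) ∧
      famOrder (MaxElems R) = famOrder R := by
  have h1 : hat (MaxElems R) = R := hat_maxElems R hR
  have hthin : Thin (MaxElems R) := by
    rintro s ⟨hsR, -⟩ t ⟨htR, htmax⟩ ⟨hts, hne⟩
    exact hne (htmax s hsR hts)
  refine ⟨hthin, h1, ⟨hthin, by rw [h1]; exact hR⟩, ?_⟩
  have hrel : extRel (MaxElems R) = extRel R := by
    funext t u
    show (t ∈ hat (MaxElems R) ∧ _) = (t ∈ hat R ∧ _)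
    rw [h1, hat_self R hR]
  unfold famOrder
  rw [hrel]
end

section
/- Let F be a regular thin family of finite subsets of ℕ and L ∈ [ℕ]^∞ such that F is very large in L. Then for every s₀, s ∈ F↾↾L with s₀ < s (i.e. max s₀ < min s) there exists a plegma path (s₀, s₁, …, s_{k−1}, s) in F↾↾L of length k = |s₀| from s₀ to s; moreover, every plegma path in F↾↾L from s₀ to s has length at least |s₀|. -/
open Set Filter

open HOSM

/-- `(p 0, …, p k)` is a plegma path: each consecutive pair is a plegma pair. -/
def IsPlegmaPath {k : ℕ} (p : Fin (k + 1) → Finset ℕ) : Prop :=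
  ∀ i : Fin k, IsPlegmaPair (p i.castSucc) (p i.succ)

namespace HOSM

-- Section 1 : elt basics
lemma elt_eq_orderEmb (t : Finset ℕ) {k : ℕ} (hk : k < t.card) :
    elt t k = t.orderEmbOfFin rfl ⟨k, hk⟩ := by
  rw [elt, Finset.orderEmbOfFin_apply]
  exact List.getD_eq_getElem _ _ (by rw [Finset.length_sort]; exact hk)

lemma elt_mem {t : Finset ℕ} {k : ℕ} (hk : k < t.card) : elt t k ∈ t := by
  rw [elt_eq_orderEmb t hk]; exact Finset.orderEmbOfFin_mem _ _ _

lemma elt_lt_elt {t : Finset ℕ} {k l : ℕ} (h : k < l) (hl : l < t.card) :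
    elt t k < elt t l := by
  rw [elt_eq_orderEmb t (h.trans hl), elt_eq_orderEmb t hl]
  exact (t.orderEmbOfFin rfl).strictMono (by exact h)

lemma elt_le_elt {t : Finset ℕ} {k l : ℕ} (h : k ≤ l) (hl : l < t.card) :
    elt t k ≤ elt t l := by
  rcases h.lt_or_eq with h | rfl
  · exact (elt_lt_elt h hl).le
  · rfl

lemma elt_surj {t : Finset ℕ} {x : ℕ} (hx : x ∈ t) : ∃ k, k < t.card ∧ elt t k = x := by
  have := Finset.range_orderEmbOfFin t (rfl : t.card = t.card)
  have hx' : x ∈ Set.range (t.orderEmbOfFin rfl) := by rw [this]; exact_mod_cast hx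
  obtain ⟨⟨k, hk⟩, hkx⟩ := hx'
  exact ⟨k, hk, by rw [elt_eq_orderEmb t hk]; exact hkx⟩

/-- Any strictly increasing listing of `t.card` members of `t` is the `elt` enumeration. -/
lemma elt_unique {t : Finset ℕ} {f : ℕ → ℕ}
    (hmono : ∀ k l, k < l → l < t.card → f k < f l)
    (hmem : ∀ k, k < t.card → f k ∈ t) :
    ∀ k, k < t.card → elt t k = f k := by
  intro k hk
  have h := Finset.orderEmbOfFin_unique (rfl : t.card = t.card)
    (f := fun i : Fin t.card => f i) (fun i => hmem i i.2)
    (fun i j hij => hmono i j hij j.2)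
  rw [elt_eq_orderEmb t hk]
  exact (congrFun h ⟨k, hk⟩).symm

end HOSM

namespace HOSM

-- Section 2 : initial segments and enumerations

/-- If `t` is an initial segment of the range of a strictly monotone `f`,
then `t` enumerates as `f`. -/
lemma elt_of_initSegOfInf {f : ℕ → ℕ} (hf : StrictMono f) {t : Finset ℕ}
    (h : InitSegOfInf t (Set.range f)) : ∀ k, k < t.card → elt t k = f k := by
  have hmem : ∀ i, i < t.card → f i ∈ t := by
    intro i hi
    by_contra hfi
    have hsub : t ⊆ (Finset.range i).image f := by
      intro x hx
      obtain ⟨j, rfl⟩ := h.1 hx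
      have hj : j < i := by
        by_contra hj
        exact hfi (h.2 (f i) ⟨i, rfl⟩ (f j) hx (hf.monotone (Nat.le_of_not_lt hj)))
      exact Finset.mem_image.2 ⟨j, Finset.mem_range.2 hj, rfl⟩
    have := (Finset.card_le_card hsub).trans Finset.card_image_le
    simp only [Finset.card_range] at this
    omega
  exact elt_unique (fun k l hkl _ => hf hkl) hmem

/-- If `w` is an initial segment of the finset `t`, their enumerations agree. -/
lemma elt_of_initSeg {w t : Finset ℕ} (h : InitSeg w t) :
    ∀ k, k < w.card → elt w k = elt t k := by
  have hcard : w.card ≤ t.card := Finset.card_le_card h.1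
  have hmem : ∀ k, k < w.card → elt t k ∈ w := by
    intro k hk
    by_contra hke
    have hsub : w ⊆ (Finset.range k).image (elt t) := by
      intro x hx
      obtain ⟨j, hj, rfl⟩ := elt_surj (h.1 hx)
      have hjk : j < k := by
        by_contra hjk
        exact hke (h.2 (elt t k) (elt_mem (hk.trans_le hcard)) (elt t j) hx
          (elt_le_elt (Nat.le_of_not_lt hjk) hj))
      exact Finset.mem_image.2 ⟨j, Finset.mem_range.2 hjk, rfl⟩
    have := (Finset.card_le_card hsub).trans Finset.card_image_le
    simp only [Finset.card_range] at this
    omega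
  exact elt_unique (fun k l hkl hl => elt_lt_elt hkl (hl.trans_le hcard)) hmem

/-- The initial segment of `t` with `n` elements. -/
lemma exists_initSeg {t : Finset ℕ} {n : ℕ} (hn : n ≤ t.card) :
    ∃ w, InitSeg w t ∧ w.card = n := by
  refine ⟨(Finset.range n).image (elt t), ⟨?_, ?_⟩, ?_⟩
  · intro x hx
    obtain ⟨j, hj, rfl⟩ := Finset.mem_image.1 hx
    exact elt_mem ((Finset.mem_range.1 hj).trans_le hn)
  · intro a ha b hb hab
    obtain ⟨k, hk, rfl⟩ := elt_surj ha
    obtain ⟨j, hj, rfl⟩ := Finset.mem_image.1 hb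
    have hj' := Finset.mem_range.1 hj
    have hkj : k ≤ j := by
      by_contra hkj
      exact absurd (elt_lt_elt (Nat.lt_of_not_le hkj) hk) (by omega)
    exact Finset.mem_image.2 ⟨k, Finset.mem_range.2 (hkj.trans_lt hj'), rfl⟩
  · rw [Finset.card_image_of_injOn, Finset.card_range]
    intro a ha b hb hab
    have ha' := Finset.mem_range.1 (Finset.mem_coe.1 ha)
    have hb' := Finset.mem_range.1 (Finset.mem_coe.1 hb)
    by_contra hne
    rcases Nat.lt_or_ge a b with h | h
    · have := elt_lt_elt h (hb'.trans_le hn); omega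
    · have h' : b < a := by omega
      have := elt_lt_elt h' (ha'.trans_le hn); omega

lemma insert_card_elt {u : Finset ℕ} {M : ℕ} (hM : ∀ x ∈ u, x < M) :
    (insert M u).card = u.card + 1 ∧
    (∀ k, k < u.card → elt (insert M u) k = elt u k) ∧
    elt (insert M u) u.card = M := by
  have hMu : M ∉ u := fun h => lt_irrefl M (hM M h)
  have hcard : (insert M u).card = u.card + 1 := Finset.card_insert_of_notMem hMu
  set f : ℕ → ℕ := fun k => if k < u.card then elt u k else M with hf
  have key : ∀ k, k < (insert M u).card → elt (insert M u) k = f k := by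
    apply elt_unique
    · intro k l hkl hl
      rw [hcard] at hl
      simp only [hf]
      split <;> split
      · exact elt_lt_elt hkl (by omega)
      · exact hM _ (elt_mem (by omega))
      · omega
      · omega
    · intro k hk
      simp only [hf]
      split
      · exact Finset.mem_insert_of_mem (elt_mem (by omega))
      · exact Finset.mem_insert_self _ _
  refine ⟨hcard, fun k hk => ?_, ?_⟩
  · rw [key k (by omega)]; simp [hf, hk]
  · rw [key u.card (by omega)]; simp [hf]

/-- Key lemma: in a thin family whose hat is spreading, a pointwise-smaller
member cannot be strictly longer. -/
lemma card_le_of_pointwise_le {F : Set (Finset ℕ)} (hthin : Thin F)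
    (hspread : Spreading (hat F)) {t u : Finset ℕ} (ht : t ∈ F) (hu : u ∈ F)
    (hle : ∀ k, k < t.card → k < u.card → elt t k ≤ elt u k) :
    t.card ≤ u.card := by
  by_contra hlt
  push_neg at hlt
  -- w : initial segment of t with u.card + 1 elements
  obtain ⟨w, hw, hwcard⟩ := exists_initSeg (t := t) (n := u.card + 1) hlt
  have hwhat : w ∈ hat F := ⟨t, ht, hw⟩
  -- v = insert M u
  set M : ℕ := max (elt t u.card) ((u.sup id) + 1) with hMdef
  have hMu : ∀ x ∈ u, x < M := by
    intro x hx
    have : x ≤ u.sup id := Finset.le_sup (f := id) hx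
    omega
  obtain ⟨hvcard, hvelt, hveltM⟩ := insert_card_elt hMu
  have hvhat : insert M u ∈ hat F := by
    apply hspread w hwhat _ (by omega)
    intro k hk
    rw [hwcard] at hk
    rw [elt_of_initSeg hw k (by omega)]
    rcases Nat.lt_or_ge k u.card with h | h
    · rw [hvelt k h]; exact hle k (by omega) h
    · have : k = u.card := by omega
      subst this
      rw [hveltM]
      exact le_max_left _ _
  obtain ⟨z, hz, hvz⟩ := hvhat
  refine hthin z hz u hu ⟨⟨?_, ?_⟩, ?_⟩
  · exact fun x hx => hvz.1 (Finset.mem_insert_of_mem hx)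
  · intro a ha b hb hab
    have hav : a ∈ insert M u :=
      hvz.2 a ha b (Finset.mem_insert_of_mem hb) hab
    rcases Finset.mem_insert.1 hav with rfl | h
    · exact absurd (hab.trans_lt (hMu b hb)) (lt_irrefl _)
    · exact h
  · intro he
    have hMz : M ∈ z := hvz.1 (Finset.mem_insert_self M u)
    rw [← he] at hMz
    exact lt_irrefl M (hMu M hMz)


end HOSM

namespace HOSM

-- Section 3 : plegma pairs
lemma isPlegmaPair_iff {t u : Finset ℕ} : IsPlegmaPair t u ↔
    t.Nonempty ∧ u.Nonempty ∧
    (∀ k, k < t.card → k < u.card → elt t k < elt u k) ∧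
    (∀ k, k < t.card → k + 1 < u.card → elt t k < elt u (k + 1)) ∧
    (∀ k, k < u.card → k + 1 < t.card → elt u k < elt t (k + 1)) := by
  constructor
  · rintro ⟨h1, h2, h3⟩
    refine ⟨by simpa using h1 0, by simpa using h1 1, ?_, ?_, ?_⟩
    · intro k hk hk'
      simpa using h2 0 1 (by norm_num) k (by simpa) (by simpa)
    · intro k hk hk'
      simpa using h3 0 1 k (by simpa) (by simpa)
    · intro k hk hk'
      simpa using h3 1 0 k (by simpa) (by simpa)
  · rintro ⟨h1, h2, h3, h4, h5⟩
    refine ⟨?_, ?_, ?_⟩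
    · intro i; fin_cases i <;> simpa
    · intro i j hij k hk hk'
      fin_cases i <;> fin_cases j
      · exact absurd hij (lt_irrefl _)
      · simp only [Matrix.cons_val_zero, Matrix.cons_val_one, Matrix.head_cons] at hk hk' ⊢
        exact h3 k hk hk'
      · exact absurd hij (by norm_num)
      · exact absurd hij (lt_irrefl _)
    · intro i j k hk hk'
      fin_cases i <;> fin_cases j <;>
        simp only [Matrix.cons_val_zero, Matrix.cons_val_one, Matrix.head_cons] at hk hk' ⊢
      · exact elt_lt_elt (Nat.lt_succ_self k) hk'
      · exact h4 k hk hk'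
      · exact h5 k hk hk'
      · exact elt_lt_elt (Nat.lt_succ_self k) hk'

/-- Cardinalities are monotone along plegma pairs in a thin family with spreading hat. -/
lemma card_mono_of_plegmaPair {F : Set (Finset ℕ)} (hthin : Thin F)
    (hspread : Spreading (hat F)) {t u : Finset ℕ} (ht : t ∈ F) (hu : u ∈ F)
    (hp : IsPlegmaPair t u) : t.card ≤ u.card := by
  obtain ⟨-, -, h3, -, -⟩ := isPlegmaPair_iff.1 hp
  exact card_le_of_pointwise_le hthin hspread ht hu (fun k hk hk' => (h3 k hk hk').le)

end HOSM

namespace HOSM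

lemma path_lower_bound (F : Set (Finset ℕ)) (hthin : Thin F)
    (hspread : Spreading (hat F)) (L : Set ℕ)
    (s₀ s : Finset ℕ) (hs₀ : s₀ ∈ restrict2 F L) (hs : s ∈ restrict2 F L)
    (hlt : ∀ a ∈ s₀, ∀ b ∈ s, a < b)
    (k : ℕ) (p : Fin (k + 1) → Finset ℕ)
    (hp0 : p 0 = s₀) (hpl : p (Fin.last _) = s)
    (hmem : ∀ i, p i ∈ restrict2 F L) (hpath : IsPlegmaPath p) :
    s₀.card ≤ k := by
  set d := s₀.card with hd
  by_contra hcon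
  push_neg at hcon
  -- reindex by ℕ
  set q : ℕ → Finset ℕ := fun j => if h : j < k + 1 then p ⟨j, h⟩ else ∅ with hq
  have hq0 : q 0 = s₀ := by
    rw [hq]; simp only [dif_pos (Nat.succ_pos k)]; exact hp0
  have hqk : q k = s := by
    rw [hq]; simp only [dif_pos (Nat.lt_succ_self k)]; exact hpl
  have hqmem : ∀ j, j ≤ k → q j ∈ F := by
    intro j hj
    rw [hq]; simp only [dif_pos (Nat.lt_succ_of_le hj)]
    exact (hmem _).1.1
  have hqpair : ∀ j, j < k → IsPlegmaPair (q j) (q (j + 1)) := by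
    intro j hj
    have := hpath ⟨j, hj⟩
    rw [hq]
    simp only [dif_pos (Nat.lt_succ_of_lt hj), dif_pos (Nat.succ_lt_succ hj)]
    simpa [Fin.castSucc_mk, Fin.succ_mk] using this
  -- cards are at least d along the path
  have hcard : ∀ j, j ≤ k → d ≤ (q j).card := by
    intro j
    induction j with
    | zero => intro _; rw [hq0]
    | succ n ih =>
      intro hn
      have h1 := ih (by omega)
      have h2 := card_mono_of_plegmaPair hthin hspread (hqmem n (by omega))
        (hqmem (n+1) hn) (hqpair n (by omega))
      omega
  -- the descending invariant
  have hinv : ∀ j, 1 ≤ j → j ≤ k → ∀ i, i + j < d → elt (q j) i < elt s₀ (i + j) := by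
    intro j
    induction j with
    | zero => omega
    | succ n ih =>
      intro _ hn i hi
      rcases Nat.eq_zero_or_pos n with rfl | hn1
      · -- base case j = 1
        obtain ⟨-, -, -, -, h5⟩ := isPlegmaPair_iff.1 (hqpair 0 (by omega))
        rw [hq0] at h5
        have hc : d ≤ (q (0+1)).card := hcard (0+1) hn
        exact h5 i (by omega) (by omega)
      · obtain ⟨-, -, -, -, h5⟩ := isPlegmaPair_iff.1 (hqpair n (by omega))
        have step : elt (q (n+1)) i < elt (q n) (i+1) :=
          h5 i (by have := hcard (n+1) hn; omega)
            (by have := hcard n (by omega); omega)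
        have := ih hn1 (by omega) (i+1) (by omega)
        have heq : i + 1 + n = i + (n+1) := by omega
        rw [heq] at this
        omega
  -- conclusion
  rcases Nat.eq_zero_or_pos k with rfl | hk1
  · -- k = 0 : s₀ = s, contradiction with hlt
    have : s₀ = s := by rw [← hq0, ← hqk]
    have hne : s₀.Nonempty := Finset.card_pos.1 (by omega)
    obtain ⟨x, hx⟩ := hne
    exact absurd (hlt x hx x (this ▸ hx)) (lt_irrefl x)
  · have h0 := hinv k hk1 le_rfl 0 (by omega)
    rw [hqk] at h0
    simp only [Nat.zero_add] at h0
    have hsc : d ≤ s.card := by have := hcard k le_rfl; rwa [hqk] at this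
    have hmem1 : elt s 0 ∈ s := elt_mem (by omega)
    have hmem2 : elt s₀ k ∈ s₀ := elt_mem (by omega)
    have := hlt _ hmem2 _ hmem1
    omega

end HOSM

namespace HOSM

lemma path_exists (F : Set (Finset ℕ)) (hthin : Thin F) (L : Set ℕ) (hL : L.Infinite)
    (hvl : VeryLarge F L)
    (s₀ s : Finset ℕ) (hs₀ : s₀ ∈ restrict2 F L) (hs : s ∈ restrict2 F L)
    (hlt : ∀ a ∈ s₀, ∀ b ∈ s, a < b) :
    ∃ p : Fin (s₀.card + 1) → Finset ℕ,
      p 0 = s₀ ∧ p (Fin.last _) = s ∧ (∀ i, p i ∈ restrict2 F L) ∧ IsPlegmaPath p := by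
  classical
  set d := s₀.card with hd
  have hs₀F : s₀ ∈ F := hs₀.1.1
  have hsF : s ∈ F := hs.1.1
  rcases Nat.eq_zero_or_pos d with hd0 | hd1
  · -- degenerate case : s₀ = ∅ and hence s = ∅
    have hse : s₀ = ∅ := Finset.card_eq_zero.1 hd0
    have hse' : s = ∅ := by
      by_contra hne
      refine hthin s hsF s₀ hs₀F ⟨⟨?_, ?_⟩, ?_⟩
      · rw [hse]; exact Finset.empty_subset s
      · intro x hx y hy
        rw [hse] at hy
        exact absurd hy (Finset.notMem_empty y)
      · rw [hse]
        exact fun h => hne h.symm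
    refine ⟨fun _ => s₀, rfl, by rw [hse, hse'], fun i => hs₀, fun i => ?_⟩
    exact absurd i.2 (by omega)
  · -- main case : d ≥ 1
    have hs₀ne : s₀.Nonempty := Finset.card_pos.1 hd1
    have hempty : ∅ ∉ F := by
      intro h
      refine hthin s₀ hs₀F ∅ h ⟨⟨Finset.empty_subset _, ?_⟩, ?_⟩
      · exact fun x hx y hy => absurd hy (Finset.notMem_empty y)
      · exact fun h' => absurd h'.symm (Finset.nonempty_iff_ne_empty.1 hs₀ne)
    have hsne : s.Nonempty := by
      rcases Finset.eq_empty_or_nonempty s with rfl | h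
      · exact absurd hsF hempty
      · exact h
    set m := s.card with hm
    have hm1 : 1 ≤ m := Finset.card_pos.2 hsne
    set a : ℕ → ℕ := elt s₀ with ha
    set b : ℕ → ℕ := elt s with hb
    have habL : ∀ i, i < d → a i ∈ L := fun i hi => hs₀.1.2 (elt_mem hi)
    have hbL : ∀ i, i < m → b i ∈ L := fun i hi => hs.1.2 (elt_mem hi)
    have hab0 : ∀ i, i < d → a i < b 0 :=
      fun i hi => hlt _ (elt_mem hi) _ (elt_mem (by omega))
    -- gap points of s₀
    have hgap₀ : ∀ j : ℕ, ∃ x, j + 1 < d → x ∈ L ∧ a j < x ∧ x < a (j + 1) := by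
      intro j
      by_cases h : j + 1 < d
      · obtain ⟨x, hx1, hx2, hx3⟩ := hs₀.2 j h
        exact ⟨x, fun _ => ⟨hx1, hx2, hx3⟩⟩
      · exact ⟨0, fun hh => absurd hh h⟩
    choose l hl using hgap₀
    -- gap points of s
    have hgaps : ∀ j : ℕ, ∃ x, j + 1 < m → x ∈ L ∧ b j < x ∧ x < b (j + 1) := by
      intro j
      by_cases h : j + 1 < m
      · obtain ⟨x, hx1, hx2, hx3⟩ := hs.2 j h
        exact ⟨x, fun _ => ⟨hx1, hx2, hx3⟩⟩
      · exact ⟨0, fun hh => absurd hh h⟩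
    choose c hc using hgaps
    -- tail of L above s
    have hLinf : {x | x ∈ L}.Infinite := by rwa [Set.setOf_mem_eq]
    have hnmono : StrictMono (Nat.nth (· ∈ L)) := Nat.nth_strictMono hLinf
    set e : ℕ → ℕ := fun i => Nat.nth (· ∈ L) (b (m - 1) + 1 + i) with he
    have hemono : StrictMono e := fun i j hij => hnmono (by omega)
    have hemem : ∀ i, e i ∈ L := fun i => Nat.nth_mem_of_infinite hLinf _
    have hegt : ∀ i, b (m - 1) < e i := by
      intro i
      have h1 : b (m - 1) + 1 + i ≤ Nat.nth (· ∈ L) (b (m - 1) + 1 + i) := hnmono.le_apply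
      simp only [he]
      omega
    -- the grid
    set g : ℕ → ℕ := fun n =>
      if n < 2 * m - 1 then (if n % 2 = 0 then b (n / 2) else c (n / 2))
      else e (n - (2 * m - 1)) with hg
    have hglt : ∀ n, g n < g (n + 1) := by
      intro n
      by_cases h1 : n + 1 < 2 * m - 1
      · have h0 : n < 2 * m - 1 := by omega
        simp only [hg, if_pos h1, if_pos h0]
        by_cases hpar : n % 2 = 0
        · rw [if_pos hpar, if_neg (by omega)]
          have : (n + 1) / 2 = n / 2 := by omega
          rw [this]
          exact (hc (n / 2) (by omega)).2.1
        · rw [if_neg hpar, if_pos (by omega)]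
          have : (n + 1) / 2 = n / 2 + 1 := by omega
          rw [this]
          exact (hc (n / 2) (by omega)).2.2
      · by_cases h0 : n < 2 * m - 1
        · have hgn1 : g (n + 1) = e (n + 1 - (2 * m - 1)) := by
            simp only [hg]; rw [if_neg (by omega)]
          have hgn : g n ≤ b (m - 1) := by
            simp only [hg, if_pos h0]
            by_cases hpar : n % 2 = 0
            · rw [if_pos hpar]
              exact elt_le_elt (by omega) (by omega)
            · rw [if_neg hpar]
              have h2 := (hc (n / 2) (by omega)).2.2
              have h3 : elt s (n / 2 + 1) ≤ elt s (m - 1) := elt_le_elt (by omega) (by omega)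
              omega
          have := hegt (n + 1 - (2 * m - 1))
          omega
        · simp only [hg, if_neg h0, if_neg (by omega : ¬(n + 1 < 2 * m - 1))]
          exact hemono (by omega)
    have hgmono : StrictMono g := strictMono_nat_of_lt_succ hglt
    have hgmem : ∀ n, g n ∈ L := by
      intro n
      by_cases h0 : n < 2 * m - 1
      · simp only [hg, if_pos h0]
        by_cases hpar : n % 2 = 0
        · rw [if_pos hpar]; exact hbL _ (by omega)
        · rw [if_neg hpar]; exact (hc (n / 2) (by omega)).1
      · simp only [hg, if_neg h0]; exact hemem _
    have hg2k : ∀ k, k < m → g (2 * k) = b k := by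
      intro k hk
      simp only [hg]
      rw [if_pos (by omega), if_pos (by omega)]
      congr 1
      omega
    have hg0 : g 0 = b 0 := by have := hg2k 0 (by omega); simpa using this
    -- the rows
    set r : ℕ → ℕ → ℕ := fun j k =>
      if k < d - j then (if j % 2 = 0 then a (k + j / 2) else l (k + (j - 1) / 2))
      else g (2 * k - (d - j)) with hr
    have hsmall_lt : ∀ j k, k < d - j → r j k < g 0 := by
      intro j k hk
      simp only [hr, if_pos hk]
      by_cases hpar : j % 2 = 0
      · rw [if_pos hpar, hg0]
        exact hab0 _ (by omega)
      · rw [if_neg hpar, hg0]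
        have h1 := (hl (k + (j - 1) / 2) (by omega)).2.2
        have h2 := hab0 (k + (j - 1) / 2 + 1) (by omega)
        omega
    -- interleaving of consecutive rows
    have hinter : ∀ j k, j < d → r j k < r (j + 1) k ∧ r (j + 1) k < r j (k + 1) := by
      intro j k hj
      constructor
      · by_cases hk1 : k < d - (j + 1)
        · have hk2 : k < d - j := by omega
          simp only [hr, if_pos hk1, if_pos hk2]
          by_cases hpar : j % 2 = 0
          · rw [if_pos hpar, if_neg (by omega : ¬((j + 1) % 2 = 0))]
            have h5 : (j + 1 - 1) / 2 = j / 2 := by omega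
            rw [h5]
            exact (hl (k + j / 2) (by omega)).2.1
          · rw [if_neg hpar, if_pos (by omega : (j + 1) % 2 = 0)]
            have h5 : k + (j + 1) / 2 = (k + (j - 1) / 2) + 1 := by omega
            rw [h5]
            exact (hl (k + (j - 1) / 2) (by omega)).2.2
        · by_cases hk2 : k < d - j
          · have h1 := hsmall_lt j k hk2
            have h2 : r (j + 1) k = g (2 * k - (d - (j + 1))) := by
              simp only [hr]; rw [if_neg hk1]
            have h3 : g 0 ≤ g (2 * k - (d - (j + 1))) := hgmono.monotone (Nat.zero_le _)
            omega
          · have h2 : r (j + 1) k = g (2 * k - (d - (j + 1))) := by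
              simp only [hr]; rw [if_neg hk1]
            have h3 : r j k = g (2 * k - (d - j)) := by
              simp only [hr]; rw [if_neg hk2]
            rw [h2, h3]
            exact hgmono (by omega)
      · by_cases hk1 : k < d - (j + 1)
        · have hk2 : k + 1 < d - j := by omega
          simp only [hr, if_pos hk1, if_pos hk2]
          by_cases hpar : j % 2 = 0
          · rw [if_neg (by omega : ¬((j + 1) % 2 = 0)), if_pos hpar]
            have h5 : (j + 1 - 1) / 2 = j / 2 := by omega
            have h6 : k + 1 + j / 2 = (k + j / 2) + 1 := by omega
            rw [h5, h6]
            exact (hl (k + j / 2) (by omega)).2.2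
          · rw [if_pos (by omega : (j + 1) % 2 = 0), if_neg hpar]
            have h5 : k + (j + 1) / 2 = k + 1 + (j - 1) / 2 := by omega
            rw [h5]
            exact (hl (k + 1 + (j - 1) / 2) (by omega)).2.1
        · by_cases hk2 : k + 1 < d - j
          · exact absurd hk2 (by omega)
          · have h2 : r (j + 1) k = g (2 * k - (d - (j + 1))) := by
              simp only [hr]; rw [if_neg hk1]
            have h3 : r j (k + 1) = g (2 * (k + 1) - (d - j)) := by
              simp only [hr]; rw [if_neg hk2]
            rw [h2, h3]
            exact hgmono (by omega)
    have hrow_mono : ∀ j, j ≤ d → StrictMono (r j) := by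
      intro j hj
      apply strictMono_nat_of_lt_succ
      intro k
      rcases Nat.lt_or_ge j d with h | h
      · exact ((hinter j k h).1).trans (hinter j k h).2
      · have h2 : r j k = g (2 * k - (d - j)) := by
          simp only [hr]; rw [if_neg (by omega)]
        have h3 : r j (k + 1) = g (2 * (k + 1) - (d - j)) := by
          simp only [hr]; rw [if_neg (by omega)]
        rw [h2, h3]
        exact hgmono (by omega)
    have hrmem : ∀ j k, r j k ∈ L := by
      intro j k
      by_cases hk : k < d - j
      · simp only [hr, if_pos hk]
        by_cases hpar : j % 2 = 0
        · rw [if_pos hpar]; exact habL _ (by omega)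
        · rw [if_neg hpar]; exact (hl _ (by omega)).1
      · simp only [hr, if_neg hk]; exact hgmem _
    -- s₀ is the initial segment of row 0
    have hr0 : ∀ k, k < d → r 0 k = a k := by
      intro k hk
      simp only [hr]
      rw [if_pos (show k < d - 0 by omega)]
      norm_num
    have hs₀init : InitSegOfInf s₀ (Set.range (r 0)) := by
      constructor
      · intro x hx
        obtain ⟨k, hk, hak⟩ := elt_surj (Finset.mem_coe.1 hx)
        exact ⟨k, by rw [hr0 k hk]; exact hak⟩
      · rintro x ⟨k, rfl⟩ y hy hxy
        by_cases hk : k < d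
        · rw [hr0 k hk]; exact elt_mem hk
        · have h2 : r 0 k = g (2 * k - (d - 0)) := by
            simp only [hr]; rw [if_neg (by omega)]
          have h3 : g 0 ≤ g (2 * k - (d - 0)) := hgmono.monotone (Nat.zero_le _)
          have h4 : y < b 0 := hlt y hy _ (elt_mem (by omega))
          rw [hg0] at h3
          omega
    -- s is the initial segment of row d
    have hrd : ∀ k, r d k = g (2 * k) := by
      intro k
      simp only [hr]
      rw [if_neg (by omega)]
      congr 1
      omega
    have hsinit : InitSegOfInf s (Set.range (r d)) := by
      constructor
      · intro x hx
        obtain ⟨k, hk, hbk⟩ := elt_surj (Finset.mem_coe.1 hx)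
        exact ⟨k, by rw [hrd k, hg2k k hk]; exact hbk⟩
      · rintro x ⟨k, rfl⟩ y hy hxy
        by_cases hk : k < m
        · rw [hrd k, hg2k k hk]; exact elt_mem hk
        · exfalso
          have h2 : g (2 * k) = e (2 * k - (2 * m - 1)) := by
            simp only [hg]; rw [if_neg (by omega)]
          obtain ⟨j, hj, hbj⟩ := elt_surj (Finset.mem_coe.1 hy)
          have h3 : elt s j ≤ elt s (m - 1) := elt_le_elt (by omega) (by omega)
          have h4 := hegt (2 * k - (2 * m - 1))
          have h5 : b (m - 1) = elt s (m - 1) := by rw [hb]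
          rw [hrd k, h2] at hxy
          omega
    -- enumerations of initial segments of rows
    have helt : ∀ j, j ≤ d → ∀ u : Finset ℕ, InitSegOfInf u (Set.range (r j)) →
        ∀ k, k < u.card → elt u k = r j k :=
      fun j hj u hu => elt_of_initSegOfInf (hrow_mono j hj) hu
    -- plegma pairs from initial segments of consecutive rows
    have hpair : ∀ j, j < d → ∀ u v : Finset ℕ, u.Nonempty → v.Nonempty →
        InitSegOfInf u (Set.range (r j)) → InitSegOfInf v (Set.range (r (j + 1))) →
        IsPlegmaPair u v := by
      intro j hj u v hu hv hiu hiv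
      have heu := helt j (by omega) u hiu
      have hev := helt (j + 1) (by omega) v hiv
      rw [isPlegmaPair_iff]
      refine ⟨hu, hv, ?_, ?_, ?_⟩
      · intro k hk hk'
        rw [heu k hk, hev k hk']
        exact (hinter j k hj).1
      · intro k hk hk'
        rw [heu k hk, hev (k + 1) hk']
        exact ((hinter j k hj).1).trans (hrow_mono (j + 1) (by omega) (Nat.lt_succ_self k))
      · intro k hk hk'
        rw [hev k hk, heu (k + 1) hk']
        exact (hinter j k hj).2
    -- membership of initial segments of rows in restrict2
    have hrestr : ∀ j, j < d → ∀ u : Finset ℕ, u ∈ F → InitSegOfInf u (Set.range (r j)) →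
        u ∈ restrict2 F L := by
      intro j hj u huF hiu
      refine ⟨⟨huF, ?_⟩, ?_⟩
      · intro x hx
        obtain ⟨k, hk⟩ := hiu.1 hx
        rw [← hk]
        exact hrmem j k
      · intro idx hidx
        refine ⟨r (j + 1) idx, hrmem (j + 1) idx, ?_, ?_⟩
        · rw [helt j (by omega) u hiu idx (by omega)]
          exact (hinter j idx hj).1
        · rw [helt j (by omega) u hiu (idx + 1) hidx]
          exact (hinter j idx hj).2
    -- middle vertices
    have hmid : ∀ j, 1 ≤ j → j < d → ∃ u : Finset ℕ,
        u ∈ restrict2 F L ∧ u.Nonempty ∧ InitSegOfInf u (Set.range (r j)) := by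
      intro j hj1 hjd
      obtain ⟨u, huF, hui⟩ := hvl (Set.range (r j))
        (by rintro x ⟨k, rfl⟩; exact hrmem j k)
        (Set.infinite_range_of_injective (hrow_mono j (by omega)).injective)
      have hune : u.Nonempty := by
        rcases Finset.eq_empty_or_nonempty u with rfl | h
        · exact absurd huF hempty
        · exact h
      exact ⟨u, hrestr j hjd u huF hui, hune, hui⟩
    -- assembling the path
    have hqex : ∀ j : ℕ, ∃ u : Finset ℕ,
        (j ≤ d → (u ∈ restrict2 F L ∧ u.Nonempty ∧ InitSegOfInf u (Set.range (r j)))) ∧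
        (j = 0 → u = s₀) ∧ (j = d → u = s) := by
      intro j
      rcases Nat.eq_zero_or_pos j with rfl | hj1
      · exact ⟨s₀, fun _ => ⟨hs₀, hs₀ne, hs₀init⟩, fun _ => rfl,
          fun h => absurd h.symm (by omega)⟩
      · rcases Nat.lt_or_ge j d with hjd | hjd
        · obtain ⟨u, h1, h2, h3⟩ := hmid j hj1 hjd
          exact ⟨u, fun _ => ⟨h1, h2, h3⟩, fun h => absurd h (by omega),
            fun h => absurd h (by omega)⟩
        · rcases Nat.eq_or_lt_of_le hjd with hjd' | hjd'
          · refine ⟨s, fun _ => ⟨hs, hsne, by rw [← hjd']; exact hsinit⟩,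
              fun h => absurd h (by omega), fun _ => rfl⟩
          · exact ⟨∅, fun h => absurd h (by omega), fun h => absurd h (by omega),
              fun h => absurd h (by omega)⟩
    choose q hq1 hq2 hq3 using hqex
    refine ⟨fun i => q i.val, hq2 0 rfl, ?_, ?_, ?_⟩
    · show q (Fin.last d).val = s
      rw [Fin.val_last]
      exact hq3 d rfl
    · intro i
      exact (hq1 i.val (by omega)).1
    · intro i
      show IsPlegmaPair (q i.castSucc.val) (q i.succ.val)
      rw [Fin.coe_castSucc, Fin.val_succ]
      obtain ⟨hu1, hu2, hu3⟩ := hq1 i.val (by omega)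
      obtain ⟨hv1, hv2, hv3⟩ := hq1 (i.val + 1) (by omega)
      exact hpair i.val i.isLt _ _ hu2 hv2 hu3 hv3

end HOSM

/-- Let `F` be regular thin, `L` infinite with `F` very large in `L`.
Then for all `s₀, s ∈ F↾↾L` with `s₀ < s` there is a plegma path in `F↾↾L` of length `|s₀|`
from `s₀` to `s`, and every plegma path in `F↾↾L` from `s₀` to `s` has length at least
`|s₀|`. -/
theorem plegma_path_of_card (F : Set (Finset ℕ)) (hF : RegularThin F)
    (L : Set ℕ) (hL : L.Infinite) (hvl : VeryLarge F L)
    (s₀ s : Finset ℕ) (hs₀ : s₀ ∈ restrict2 F L) (hs : s ∈ restrict2 F L)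
    (hlt : ∀ a ∈ s₀, ∀ b ∈ s, a < b) :
    (∃ p : Fin (s₀.card + 1) → Finset ℕ,
        p 0 = s₀ ∧ p (Fin.last _) = s ∧ (∀ i, p i ∈ restrict2 F L) ∧ IsPlegmaPath p) ∧
    (∀ k : ℕ, ∀ p : Fin (k + 1) → Finset ℕ,
        p 0 = s₀ → p (Fin.last _) = s → (∀ i, p i ∈ restrict2 F L) → IsPlegmaPath p →
        s₀.card ≤ k) := by
  obtain ⟨hthin, -, -, hspread⟩ := hF
  constructor
  · exact path_exists F hthin L hL hvl s₀ s hs₀ hs hlt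
  · intro k p hp0 hpl hmem hpath
    exact path_lower_bound F hthin hspread L s₀ s hs₀ hs hlt k p hp0 hpl hmem hpath
end
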